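/- The set wLip1([0,1]) = {f ∈ C([0,1],[0,1]) : |f(x) − f(y)| < |x − y| for all x ≠ y} is a G_δ subset of a closed subset of C([0,1],[0,1]) (with the supremum metric); in particular wLip1([0,1]) is a Polish space. -/
import Mathlib


/-- The family `wLip1([0,1])` of weak contractions of `[0,1]`, as a subset of
`C([0,1],[0,1])` with the supremum metric. -/
def wLip1 : Set C(Set.Icc (0 : ℝ) 1, Set.Icc (0 : ℝ) 1) :=
  {f | ∀ x y, x ≠ y → dist (f x) (f y) < dist x y}

open Metric Set Topology

namespace WLip1Aux

/-- The basic open sets whose intersection is `wLip1`. -/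
def Un (n : ℕ) : Set C(Set.Icc (0 : ℝ) 1, Set.Icc (0 : ℝ) 1) :=
  {f | ∀ x y, 1 / ((n : ℝ) + 1) ≤ dist x y → dist (f x) (f y) < dist x y}

def pa : Set.Icc (0 : ℝ) 1 := ⟨0, by norm_num⟩
def pb : Set.Icc (0 : ℝ) 1 := ⟨1, by norm_num⟩

lemma dist_pa_pb : dist pa pb = 1 := by
  rw [Subtype.dist_eq]
  simp [pa, pb, Real.dist_eq]

lemma wLip1_eq : wLip1 = ⋂ n, Un n := by
  ext f
  simp only [wLip1, Un, Set.mem_setOf_eq, Set.mem_iInter]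
  constructor
  · intro h n x y hxy
    refine h x y ?_
    rintro rfl
    rw [dist_self] at hxy
    have : (0 : ℝ) < 1 / ((n : ℝ) + 1) := by positivity
    linarith
  · intro h x y hne
    obtain ⟨n, hn⟩ := exists_nat_one_div_lt (dist_pos.2 hne)
    exact h n x y hn.le

lemma isOpen_Un (n : ℕ) : IsOpen (Un n) := by
  rw [Metric.isOpen_iff]
  intro f hf
  set S : Set (Set.Icc (0 : ℝ) 1 × Set.Icc (0 : ℝ) 1) :=
    {p | 1 / ((n : ℝ) + 1) ≤ dist p.1 p.2} with hSdef
  have hSclosed : IsClosed S := isClosed_le continuous_const continuous_dist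
  have hScomp : IsCompact S := hSclosed.isCompact
  have hSne : S.Nonempty := by
    refine ⟨(pa, pb), ?_⟩
    simp only [hSdef, Set.mem_setOf_eq, dist_pa_pb]
    rw [div_le_one (by positivity)]
    have : (0 : ℝ) ≤ (n : ℝ) := Nat.cast_nonneg n
    linarith
  have hcont : Continuous fun p : Set.Icc (0 : ℝ) 1 × Set.Icc (0 : ℝ) 1 =>
      dist p.1 p.2 - dist (f p.1) (f p.2) := by fun_prop
  obtain ⟨p₀, hp₀S, hp₀min⟩ := hScomp.exists_isMinOn hSne hcont.continuousOn
  set ε : ℝ := dist p₀.1 p₀.2 - dist (f p₀.1) (f p₀.2) with hεdef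
  have hε : 0 < ε := sub_pos.2 (hf p₀.1 p₀.2 hp₀S)
  refine ⟨ε / 2, by positivity, ?_⟩
  intro g hg
  rw [Metric.mem_ball] at hg
  intro x y hxy
  have hxyS : (x, y) ∈ S := hxy
  have h2 : ε ≤ dist x y - dist (f x) (f y) := hp₀min hxyS
  have h3 : dist (g x) (f x) ≤ dist g f := ContinuousMap.dist_apply_le_dist x
  have h4 : dist (f y) (g y) ≤ dist g f := by
    rw [dist_comm]; exact ContinuousMap.dist_apply_le_dist y
  have h5 : dist (g x) (g y) ≤ dist (g x) (f x) + dist (f x) (f y) + dist (f y) (g y) :=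
    dist_triangle4 _ _ _ _
  linarith

lemma isGδ_wLip1 : IsGδ wLip1 := by
  rw [wLip1_eq]
  exact IsGδ.iInter_of_isOpen isOpen_Un

lemma compl_Un_nonempty (n : ℕ) : (Un n)ᶜ.Nonempty := by
  refine ⟨ContinuousMap.id _, fun h => ?_⟩
  have := h pa pb (by
    rw [dist_pa_pb, div_le_one (by positivity)]
    have : (0 : ℝ) ≤ (n : ℝ) := Nat.cast_nonneg n
    linarith)
  simp only [ContinuousMap.id_apply] at this
  exact lt_irrefl _ this

lemma infDist_pos {f : C(Set.Icc (0 : ℝ) 1, Set.Icc (0 : ℝ) 1)} (hf : f ∈ wLip1) (n : ℕ) :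
    0 < infDist f (Un n)ᶜ := by
  have hfn : f ∈ Un n := by
    rw [wLip1_eq] at hf
    exact Set.mem_iInter.1 hf n
  exact ((isOpen_Un n).isClosed_compl.notMem_iff_infDist_pos (compl_Un_nonempty n)).1
    (by simpa using hfn)

/-- The embedding of `wLip1` into `X × (ℕ → ℝ)`. -/
noncomputable def φ (f : wLip1) : C(Set.Icc (0 : ℝ) 1, Set.Icc (0 : ℝ) 1) × (ℕ → ℝ) :=
  ((f : C(Set.Icc (0 : ℝ) 1, Set.Icc (0 : ℝ) 1)),
    fun n => (infDist (f : C(Set.Icc (0 : ℝ) 1, Set.Icc (0 : ℝ) 1)) (Un n)ᶜ)⁻¹)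

lemma continuous_φ : Continuous φ := by
  refine Continuous.prodMk continuous_subtype_val (continuous_pi fun n => ?_)
  exact (((continuous_infDist_pt ((Un n)ᶜ)).comp continuous_subtype_val).inv₀
    fun f => (infDist_pos f.2 n).ne')

lemma isEmbedding_φ : IsEmbedding φ := by
  refine IsEmbedding.of_comp continuous_φ continuous_fst ?_
  exact IsEmbedding.subtypeVal

lemma range_φ : Set.range φ =
    ⋂ n, (fun p : C(Set.Icc (0 : ℝ) 1, Set.Icc (0 : ℝ) 1) × (ℕ → ℝ) =>
      p.2 n * infDist p.1 (Un n)ᶜ) ⁻¹' {1} := by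
  ext p
  simp only [Set.mem_range, Set.mem_iInter, Set.mem_preimage, Set.mem_singleton_iff]
  constructor
  · rintro ⟨f, rfl⟩ n
    simp only [φ]
    exact inv_mul_cancel₀ (infDist_pos f.2 n).ne'
  · intro h
    have hmem : ∀ n, p.1 ∈ Un n := by
      intro n
      by_contra hn
      have h0 : infDist p.1 (Un n)ᶜ = 0 := infDist_zero_of_mem (by simpa using hn)
      have hn1 := h n
      rw [h0, mul_zero] at hn1
      exact one_ne_zero hn1.symm
    have hp1 : p.1 ∈ wLip1 := by
      rw [wLip1_eq]
      exact Set.mem_iInter.2 hmem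
    refine ⟨⟨p.1, hp1⟩, ?_⟩
    have h2 : p.2 = fun n => (infDist p.1 (Un n)ᶜ)⁻¹ := by
      funext n
      have hd : infDist p.1 (Un n)ᶜ ≠ 0 :=
        (((isOpen_Un n).isClosed_compl.notMem_iff_infDist_pos (compl_Un_nonempty n)).1
          (by simpa using hmem n)).ne'
      field_simp
      linarith [h n]
    rw [φ]
    exact Prod.ext rfl h2.symm

lemma isClosed_range_φ : IsClosed (Set.range φ) := by
  rw [range_φ]
  refine isClosed_iInter fun n => IsClosed.preimage ?_ isClosed_singleton
  exact (continuous_apply n).comp continuous_snd |>.mul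
    ((continuous_infDist_pt ((Un n)ᶜ)).comp continuous_fst)

lemma isClosedEmbedding_φ : IsClosedEmbedding φ :=
  ⟨isEmbedding_φ, isClosed_range_φ⟩

end WLip1Aux

/-- `wLip1([0,1])` is a `G_δ` subset of a closed subset of `C([0,1],[0,1])`;
in particular `wLip1([0,1])` is a Polish space. -/
theorem stmt13 :
    (∃ (F G : Set C(Set.Icc (0 : ℝ) 1, Set.Icc (0 : ℝ) 1)),
      IsClosed F ∧ IsGδ G ∧ wLip1 = F ∩ G) ∧ PolishSpace wLip1 := by
  constructor
  · exact ⟨Set.univ, wLip1, isClosed_univ, WLip1Aux.isGδ_wLip1, (Set.univ_inter _).symm⟩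
  · exact WLip1Aux.isClosedEmbedding_φ.polishSpace
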